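/- Let α ∈ (0,1), let N ≥ 1, and for each j let mⱼ ∈ ℝ and σⱼ > 0, and let ω₁,…,ω_N be positive reals with Σⱼ ωⱼ = 1. Let μ = Σⱼ ωⱼ • gaussianReal mⱼ (σⱼ²) be the Gaussian mixture, let q = VaR_α(μ), and let αⱼ = μⱼ((q,∞)) = 1 − Φ((q − mⱼ)/σⱼ) be the tail probability of the j-th component beyond q, where Φ and φ are the cumulative distribution function and density of the standard real Gaussian. Then CVaR_α(μ) = (1/α) · Σⱼ ωⱼ · ( αⱼ · mⱼ + σⱼ · φ((q − mⱼ)/σⱼ) ). -/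

import Mathlib

open MeasureTheory ProbabilityTheory Set

/-- Value-at-risk of a Borel probability measure `μ` on `ℝ` at level `α`:
`VaR_α(μ) = sInf { z | μ((-∞, z]) ≥ 1 - α }`. -/
noncomputable def VaR (μ : Measure ℝ) (α : ℝ) : ℝ :=
  sInf {z : ℝ | 1 - α ≤ (μ (Iic z)).toReal}

/-- Conditional value-at-risk via the Rockafellar–Uryasev formula:
`CVaR_α(μ) = ⨅ z, z + (1/α) ∫ max(y - z, 0) dμ(y)`. -/
noncomputable def CVaR (μ : Measure ℝ) (α : ℝ) : ℝ :=
  ⨅ z : ℝ, z + (1 / α) * ∫ y, max (y - z) 0 ∂μ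

/-! The Rockafellar–Uryasev objective `z ↦ z + 𝔼(Y - z)⁺ / α` is minimised at every `q` with
`ℙ(Y > q) = α`, since `(y - q)⁺ + (q - z) 𝟙{y > q} ≤ (y - z)⁺` pointwise. A Gaussian mixture has
a continuous CDF, so `q = VaR_α` has tail mass exactly `α`. Both the tail mass and `𝔼(Y - q)⁺` are
linear in the mixture, and for one component `N(m, σ²)` standardization gives
`𝔼(Y - q)⁺ = σ (φ(t) - t (1 - Φ(t)))` with `t = (q - m) / σ`, from `∫_t^∞ x φ(x) dx = φ(t)`,
which holds because `φ' = -x φ`. -/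

open Filter Topology Real
open scoped NNReal

section Mixture

variable {Ω ι : Type*} [MeasurableSpace Ω] [Fintype ι] (ω : ι → ℝ) (ν : ι → Measure Ω)

noncomputable def mixture : Measure Ω := ∑ i, ENNReal.ofReal (ω i) • ν i

lemma mixture_real_apply (hω : ∀ i, 0 ≤ ω i) [∀ i, IsFiniteMeasure (ν i)] (s : Set Ω) :
    (mixture ω ν).real s = ∑ i, ω i * (ν i).real s := by
  rw [measureReal_def, mixture, Measure.finsetSum_apply, ENNReal.toReal_sum]
  · simp [ENNReal.toReal_ofReal (hω _), measureReal_def]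
  · intro i _
    simp [ENNReal.mul_eq_top, measure_ne_top]

lemma isProbabilityMeasure_mixture (hω : ∀ i, 0 ≤ ω i) (hsum : ∑ i, ω i = 1)
    [∀ i, IsProbabilityMeasure (ν i)] : IsProbabilityMeasure (mixture ω ν) := by
  constructor
  simp [mixture, Measure.finsetSum_apply, ← ENNReal.ofReal_sum_of_nonneg fun i _ => hω i, hsum]

instance nullSingletonClass_mixture [∀ i, NullSingletonClass (ν i)] :
    NullSingletonClass (mixture ω ν) :=
  ⟨fun x => by simp [mixture, Measure.finsetSum_apply]⟩

lemma integrable_mixture {E : Type*} [NormedAddCommGroup E] {f : Ω → E}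
    (hf : ∀ i, Integrable f (ν i)) : Integrable f (mixture ω ν) :=
  integrable_finsetSum_measure.mpr fun i _ => (hf i).smul_measure ENNReal.ofReal_ne_top

lemma integral_mixture {E : Type*} [NormedAddCommGroup E] [NormedSpace ℝ E]
    (hω : ∀ i, 0 ≤ ω i) {f : Ω → E} (hf : ∀ i, Integrable f (ν i)) :
    ∫ x, f x ∂mixture ω ν = ∑ i, ω i • ∫ x, f x ∂ν i := by
  rw [mixture, integral_finsetSum_measure fun i _ => (hf i).smul_measure ENNReal.ofReal_ne_top]
  simp [integral_smul_measure, ENNReal.toReal_ofReal (hω _)]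

end Mixture

section Quantile

variable (μ : Measure ℝ) [IsProbabilityMeasure μ]

lemma measureReal_Ioi_eq_one_sub (x : ℝ) : μ.real (Ioi x) = 1 - μ.real (Iic x) := by
  rw [← compl_Iic, probReal_compl_eq_one_sub measurableSet_Iic]

lemma continuous_cdf [NullSingletonClass μ] : Continuous (cdf μ) := by
  refine continuous_iff_continuousAt.mpr fun x => continuousAt_iff_continuous_left_right.mpr
    ⟨?_, (cdf μ).right_continuous x⟩
  rw [← continuousWithinAt_Iio_iff_Iic,
    (monotone_cdf μ).continuousWithinAt_Iio_iff_leftLim_eq]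
  have hjump : ENNReal.ofReal (cdf μ x - Function.leftLim (cdf μ) x) = 0 := by
    rw [← StieltjesFunction.measure_singleton, measure_cdf, measure_singleton]
  have hleft := (monotone_cdf μ).leftLim_le (le_refl x)
  rw [ENNReal.ofReal_eq_zero] at hjump
  linarith

lemma measureReal_Iic_VaR [NullSingletonClass μ] {α : ℝ} (hα : α ∈ Ioo 0 1) :
    μ.real (Iic (VaR μ α)) = 1 - α := by
  set S := cdf μ ⁻¹' Ici (1 - α)
  have hS : VaR μ α = sInf S := by
    unfold VaR; congr 1; ext z; simp [S, cdf_eq_real, measureReal_def]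
  have hne : S.Nonempty :=
    ((tendsto_cdf_atTop μ).eventually_const_le (show 1 - α < 1 by linarith [hα.1])).exists
  have hbdd : BddBelow S := by
    obtain ⟨z₀, hz₀⟩ :=
      ((tendsto_cdf_atBot μ).eventually_lt_const (show 0 < 1 - α by linarith [hα.2])).exists
    exact ⟨z₀, fun z hz => le_of_not_gt fun hlt =>
      (lt_of_le_of_lt (monotone_cdf μ hlt.le) hz₀).not_ge hz⟩
  have hge : 1 - α ≤ cdf μ (sInf S) :=
    (isClosed_Ici.preimage (continuous_cdf μ)).csInf_mem hne hbdd
  have hle : cdf μ (sInf S) ≤ 1 - α := by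
    refine le_of_tendsto ((continuous_cdf μ).continuousWithinAt (s := Iio (sInf S))) ?_
    filter_upwards [self_mem_nhdsWithin] with z hz
    have hzS : z ∉ S := notMem_of_lt_csInf hz hbdd
    exact (not_le.mp hzS).le
  rw [hS, ← cdf_eq_real]
  exact le_antisymm hle hge

lemma measureReal_Ioi_VaR [NullSingletonClass μ] {α : ℝ} (hα : α ∈ Ioo 0 1) :
    μ.real (Ioi (VaR μ α)) = α := by
  rw [measureReal_Ioi_eq_one_sub, measureReal_Iic_VaR μ hα, sub_sub_cancel]

end Quantile

lemma posPart_sub_eq_indicator (t x : ℝ) : max (x - t) 0 = (Ioi t).indicator (· - t) x := by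
  by_cases hx : t < x
  · simp [hx, hx.le]
  · simp [hx, not_lt.mp hx]

lemma integrable_posPart_sub {μ : Measure ℝ} [IsFiniteMeasure μ] (hμ : Integrable id μ)
    (t : ℝ) : Integrable (fun y => max (y - t) 0) μ :=
  (hμ.sub (integrable_const t)).pos_part

lemma posPart_sub_add_indicator_le (q z y : ℝ) :
    max (y - q) 0 + (Ioi q).indicator (fun _ => q - z) y ≤ max (y - z) 0 := by
  by_cases hy : q < y
  · simp [indicator_of_mem (mem_Ioi.mpr hy), hy.le]
  · simp [not_lt.mp hy]

lemma CVaR_eq_of_measureReal_Ioi {μ : Measure ℝ} [IsFiniteMeasure μ] {α q : ℝ} (hα : 0 < α)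
    (hμ : Integrable id μ) (hq : μ.real (Ioi q) = α) :
    CVaR μ α = q + 1 / α * ∫ y, max (y - q) 0 ∂μ := by
  have hint := integrable_posPart_sub hμ
  have hmin (z : ℝ) : ∫ y, max (y - q) 0 ∂μ + (q - z) * α ≤ ∫ y, max (y - z) 0 ∂μ := by
    have hind : Integrable ((Ioi q).indicator fun _ => q - z) μ :=
      (integrable_const _).indicator measurableSet_Ioi
    calc ∫ y, max (y - q) 0 ∂μ + (q - z) * α
        = ∫ y, max (y - q) 0 + (Ioi q).indicator (fun _ => q - z) y ∂μ := by
          rw [integral_add (hint q) hind, integral_indicator_const _ measurableSet_Ioi, hq,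
            smul_eq_mul, mul_comm]
      _ ≤ ∫ y, max (y - z) 0 ∂μ :=
          integral_mono ((hint q).add hind) (hint z) (posPart_sub_add_indicator_le q z)
  have hlb (z : ℝ) :
      q + 1 / α * ∫ y, max (y - q) 0 ∂μ ≤ z + 1 / α * ∫ y, max (y - z) 0 ∂μ := by
    have := mul_le_mul_of_nonneg_left (hmin z) (one_div_nonneg.mpr hα.le)
    rw [mul_add, show 1 / α * ((q - z) * α) = q - z by field_simp] at this
    linarith
  exact le_antisymm (ciInf_le ⟨_, forall_mem_range.mpr hlb⟩ q) (le_ciInf hlb)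

lemma gaussianPDFReal_zero_one (x : ℝ) :
    gaussianPDFReal 0 1 x = exp (-(x ^ 2) / 2) / √(2 * π) := by
  simp [gaussianPDFReal, div_eq_inv_mul]

lemma hasDerivAt_gaussianPDFReal_zero_one (x : ℝ) :
    HasDerivAt (gaussianPDFReal 0 1) (-x * gaussianPDFReal 0 1 x) x := by
  have hexp : HasDerivAt (fun y : ℝ => exp (-(y ^ 2) / 2)) (exp (-(x ^ 2) / 2) * -x) x :=
    ((hasDerivAt_pow 2 x).neg.div_const 2).exp.congr_deriv (by simp; ring)
  rw [funext gaussianPDFReal_zero_one]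
  exact (hexp.div_const √(2 * π)).congr_deriv (by ring)

lemma integrable_mul_gaussianPDFReal_zero_one :
    Integrable fun x => x * gaussianPDFReal 0 1 x := by
  refine ((integrable_mul_exp_neg_mul_sq (b := 1 / 2) one_half_pos).div_const √(2 * π)).congr
    (ae_of_all _ fun x => ?_)
  simp only [gaussianPDFReal_zero_one]
  ring_nf

lemma tendsto_gaussianPDFReal_zero_one_atTop :
    Tendsto (gaussianPDFReal 0 1) atTop (𝓝 0) := by
  have hsq : Tendsto (fun x : ℝ => -(x ^ 2) / 2) atTop atBot :=
    (tendsto_neg_atTop_atBot.comp (tendsto_pow_atTop two_ne_zero)).atBot_div_const two_pos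
  simpa [funext gaussianPDFReal_zero_one] using
    (tendsto_exp_atBot.comp hsq).div_const √(2 * π)

lemma integral_Ioi_mul_gaussianPDFReal_zero_one (t : ℝ) :
    ∫ x in Ioi t, x * gaussianPDFReal 0 1 x = gaussianPDFReal 0 1 t := by
  have hderiv (x : ℝ) :
      HasDerivAt (fun y => -gaussianPDFReal 0 1 y) (x * gaussianPDFReal 0 1 x) x :=
    (hasDerivAt_gaussianPDFReal_zero_one x).neg.congr_deriv (by ring)
  simpa using integral_Ioi_of_hasDerivAt_of_tendsto' (fun x _ => hderiv x)
    integrable_mul_gaussianPDFReal_zero_one.integrableOn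
    tendsto_gaussianPDFReal_zero_one_atTop.neg

lemma integrable_id_gaussianReal (m : ℝ) (v : ℝ≥0) : Integrable id (gaussianReal m v) :=
  (memLp_id_gaussianReal 1).integrable le_rfl

lemma integral_posPart_sub_gaussianReal_zero_one (t : ℝ) :
    ∫ x, max (x - t) 0 ∂gaussianReal 0 1
      = gaussianPDFReal 0 1 t - t * (gaussianReal 0 1).real (Ioi t) := by
  have htail : (gaussianReal 0 1).real (Ioi t) = ∫ x in Ioi t, gaussianPDFReal 0 1 x := by
    rw [measureReal_def, gaussianReal_apply_eq_integral _ one_ne_zero,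
      ENNReal.toReal_ofReal (setIntegral_nonneg measurableSet_Ioi fun x _ =>
        gaussianPDFReal_nonneg _ _ x)]
  calc ∫ x, max (x - t) 0 ∂gaussianReal 0 1
      = ∫ x in Ioi t, x * gaussianPDFReal 0 1 x - t * gaussianPDFReal 0 1 x := by
        rw [integral_gaussianReal_eq_integral_smul one_ne_zero,
          ← integral_indicator measurableSet_Ioi]
        congr 1 with x
        rw [posPart_sub_eq_indicator, smul_eq_mul, ← indicator_mul_right]
        congr 1 with x
        ring
    _ = _ := by
        rw [integral_sub integrable_mul_gaussianPDFReal_zero_one.integrableOn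
          ((integrable_gaussianPDFReal 0 1).const_mul t).integrableOn, integral_const_mul,
          integral_Ioi_mul_gaussianPDFReal_zero_one, htail]

lemma gaussianReal_eq_map_affine (m σ : ℝ) :
    gaussianReal m ⟨σ ^ 2, sq_nonneg σ⟩ = (gaussianReal 0 1).map (fun x => σ * x + m) := by
  have hmap : (gaussianReal 0 1).map (σ * ·) = gaussianReal 0 ⟨σ ^ 2, sq_nonneg σ⟩ := by
    rw [gaussianReal_map_const_mul, mul_zero, mul_one]
    rfl
  calc gaussianReal m ⟨σ ^ 2, sq_nonneg σ⟩
      = ((gaussianReal 0 1).map (σ * ·)).map (· + m) := by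
        rw [hmap]
        simpa using (gaussianReal_map_add_const (μ := 0) (v := ⟨σ ^ 2, sq_nonneg σ⟩) m).symm
    _ = _ := Measure.map_map (measurable_add_const m) (measurable_const_mul σ)

lemma measureReal_Ioi_gaussianReal {m σ : ℝ} (hσ : 0 < σ) (q : ℝ) :
    (gaussianReal m ⟨σ ^ 2, sq_nonneg σ⟩).real (Ioi q)
      = (gaussianReal 0 1).real (Ioi ((q - m) / σ)) := by
  have hpre : (fun x => σ * x + m) ⁻¹' Ioi q = Ioi ((q - m) / σ) := by
    ext x
    simp [div_lt_iff₀ hσ, mul_comm, sub_lt_iff_lt_add]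
  rw [gaussianReal_eq_map_affine, map_measureReal_apply (by fun_prop) measurableSet_Ioi, hpre]

lemma integral_posPart_sub_gaussianReal {m σ : ℝ} (hσ : 0 < σ) (q : ℝ) :
    ∫ y, max (y - q) 0 ∂gaussianReal m ⟨σ ^ 2, sq_nonneg σ⟩
      = σ * gaussianPDFReal 0 1 ((q - m) / σ)
        + (m - q) * (gaussianReal 0 1).real (Ioi ((q - m) / σ)) := by
  have hscale (x : ℝ) : max (σ * x + m - q) 0 = σ * max (x - (q - m) / σ) 0 := by
    rw [mul_max_of_nonneg _ _ hσ.le, mul_zero, mul_sub, mul_div_cancel₀ _ hσ.ne']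
    ring_nf
  rw [gaussianReal_eq_map_affine, integral_map (by fun_prop) (by fun_prop)]
  simp_rw [hscale]
  rw [integral_const_mul, integral_posPart_sub_gaussianReal_zero_one, mul_sub,
    ← mul_assoc, mul_div_cancel₀ _ hσ.ne']
  ring

theorem cvar_gaussian_mixture_general (α : ℝ) (hα : α ∈ Set.Ioo (0 : ℝ) 1)
    (N : ℕ)
    (m : Fin N → ℝ) (σ : Fin N → ℝ) (hσ : ∀ j, 0 < σ j)
    (ω : Fin N → ℝ) (hω : ∀ j, 0 < ω j) (hsum : ∑ j, ω j = 1)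
    (μ : Measure ℝ)
    (hμ : μ = ∑ j, ENNReal.ofReal (ω j) •
      gaussianReal (m j) ⟨(σ j) ^ 2, sq_nonneg (σ j)⟩)
    (q : ℝ) (hq : q = VaR μ α)
    (Phi : ℝ → ℝ) (hPhi : ∀ x, Phi x = ((gaussianReal 0 1) (Iic x)).toReal)
    (phi : ℝ → ℝ)
    (hphi : ∀ x, phi x = Real.exp (-(x ^ 2) / 2) / Real.sqrt (2 * Real.pi))
    (a : Fin N → ℝ) (ha : ∀ j, a j = 1 - Phi ((q - m j) / σ j)) :
    CVaR μ α
      = (1 / α) * ∑ j, ω j * (a j * m j + σ j * phi ((q - m j) / σ j)) := by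
  set ν : Fin N → Measure ℝ := fun j => gaussianReal (m j) ⟨σ j ^ 2, sq_nonneg (σ j)⟩
  have hω' (j : Fin N) : 0 ≤ ω j := (hω j).le
  have hνprob (j : Fin N) : IsProbabilityMeasure (ν j) :=
    instIsProbabilityMeasureGaussianReal _ _
  have hνatom (j : Fin N) : NullSingletonClass (ν j) := nullSingletonClass_gaussianReal
    fun h => pow_ne_zero 2 (hσ j).ne' (congrArg NNReal.toReal h)
  have hμν : μ = mixture ω ν := hμ
  subst hμν
  have : IsProbabilityMeasure (mixture ω ν) := isProbabilityMeasure_mixture ω ν hω' hsum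
  have hint : Integrable id (mixture ω ν) :=
    integrable_mixture ω ν fun j => integrable_id_gaussianReal _ _
  have htail : (mixture ω ν).real (Ioi q) = α := hq ▸ measureReal_Ioi_VaR _ hα
  have ha' (j : Fin N) : a j = (gaussianReal 0 1).real (Ioi ((q - m j) / σ j)) := by
    rw [ha, hPhi, measureReal_Ioi_eq_one_sub, measureReal_def]
  have hα_eq : α = ∑ j, ω j * a j := by
    rw [← htail, mixture_real_apply ω ν hω']
    simp only [ν, measureReal_Ioi_gaussianReal (hσ _), ha']
  rw [CVaR_eq_of_measureReal_Ioi hα.1 hint htail, integral_mixture ω ν hω' fun j =>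
    integrable_posPart_sub (integrable_id_gaussianReal _ _) q]
  simp only [ν, integral_posPart_sub_gaussianReal (hσ _), ← ha', hphi,
    ← gaussianPDFReal_zero_one, smul_eq_mul]
  field_simp [hα.1.ne']
  rw [hα_eq, Finset.mul_sum, ← Finset.sum_add_distrib]
  exact Finset.sum_congr rfl fun j _ => by ring

/-- Explicit CVaR of a Gaussian mixture: with `q = VaR_α(μ)` and component tail
probabilities `αⱼ = 1 - Φ((q - mⱼ)/σⱼ)`,
`CVaR_α(μ) = (1/α) Σⱼ ωⱼ (αⱼ mⱼ + σⱼ φ((q - mⱼ)/σⱼ))`. -/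
theorem cvar_gaussian_mixture (α : ℝ) (hα : α ∈ Set.Ioo (0 : ℝ) 1)
    (N : ℕ) (hN : 1 ≤ N)
    (m : Fin N → ℝ) (σ : Fin N → ℝ) (hσ : ∀ j, 0 < σ j)
    (ω : Fin N → ℝ) (hω : ∀ j, 0 < ω j) (hsum : ∑ j, ω j = 1)
    (μ : Measure ℝ)
    (hμ : μ = ∑ j, ENNReal.ofReal (ω j) •
      gaussianReal (m j) ⟨(σ j) ^ 2, sq_nonneg (σ j)⟩)
    (q : ℝ) (hq : q = VaR μ α)
    (Phi : ℝ → ℝ) (hPhi : ∀ x, Phi x = ((gaussianReal 0 1) (Iic x)).toReal)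
    (phi : ℝ → ℝ)
    (hphi : ∀ x, phi x = Real.exp (-(x ^ 2) / 2) / Real.sqrt (2 * Real.pi))
    (a : Fin N → ℝ) (ha : ∀ j, a j = 1 - Phi ((q - m j) / σ j)) :
    CVaR μ α
      = (1 / α) * ∑ j, ω j * (a j * m j + σ j * phi ((q - m j) / σ j)) :=
  cvar_gaussian_mixture_general α hα N m σ hσ ω hω hsum μ hμ q hq Phi hPhi phi hphi a ha
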